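/- arXiv:1604.07615 — 2 statements merged into one kernel-verified Lean document; each statement's English description precedes it below -/
import Mathlib

section
/- Let X be a generic metric space with exactly n ≥ 2 points and set δ = δ(X)/6. If Y and Y' are metric spaces each with at most n points satisfying d_GH(X,Y) < δ and d_GH(X,Y') < δ, then Y and Y' each have exactly n points and d_GH(Y,Y') = ‖ν(Y) − ν(Y')‖_∞. -/
open scoped Classical

/-- The list of half-distances between unordered pairs of distinct points of a finite
metric space, arranged in ascending order: the vector `ν(X) ∈ ℝ^{n(n-1)/2}_∞`. -/
noncomputable def nuList (X : Type*) [MetricSpace X] [Fintype X] : List ℝ :=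
  ((Finset.univ.filter fun p : Sym2 X => ¬ p.IsDiag).val.map
    (Sym2.lift ⟨fun x y => dist x y / 2, fun x y => by simp [dist_comm]⟩)).sort (· ≤ ·)

/-- The `ℓ^∞` distance `‖ν(X) − ν(Y)‖_∞` between two vectors given as lists
(the maximum of coordinatewise absolute differences). -/
noncomputable def supDist (l₁ l₂ : List ℝ) : ℝ :=
  (List.zipWith (fun a b => |a - b|) l₁ l₂).foldr max 0

/-- The quantity `δ(X)`: for a space with at most two points, the distance between the
two points (i.e. the diameter); otherwise the least of the minimal triangle-inequality
defect and the minimal difference of distances of essentially distinct pairs. -/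
noncomputable def deltaX (X : Type*) [MetricSpace X] [Fintype X] : ℝ :=
  if Fintype.card X ≤ 2 then Metric.diam (Set.univ : Set X)
  else
    min
      (sInf {r : ℝ | ∃ x y z : X, x ≠ y ∧ y ≠ z ∧ x ≠ z ∧ r = dist x y + dist y z - dist x z})
      (sInf {r : ℝ | ∃ x y p q : X, x ≠ y ∧ p ≠ q ∧ 3 ≤ ({x, y, p, q} : Set X).ncard ∧
        r = |dist x y - dist p q|})

/-- A finite metric space is generic if all its nonzero distances are pairwise distinct
and all its triangle inequalities are strict. -/
def IsGenericSpace (X : Type*) [MetricSpace X] : Prop :=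
  (∀ x y z w : X, x ≠ y → z ≠ w → dist x y = dist z w → ({x, y} : Set X) = {z, w}) ∧
  (∀ x y z : X, x ≠ y → y ≠ z → x ≠ z → dist x z < dist x y + dist y z)

/-- A bijection between metric spaces is a structural isomorphism if it preserves the
order on the set of distances. -/
def IsStructuralIsomorphism {X Y : Type*} [MetricSpace X] [MetricSpace Y] (f : X ≃ Y) : Prop :=
  ∀ x y z w : X, dist x y ≤ dist z w ↔ dist (f x) (f y) ≤ dist (f z) (f w)

/-- The distortion of a relation between two metric spaces. -/
noncomputable def relDis {X Y : Type*} [MetricSpace X] [MetricSpace Y]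
    (R : Set (X × Y)) : ℝ :=
  sSup {r : ℝ | ∃ p ∈ R, ∃ q ∈ R, r = |dist p.1 q.1 - dist p.2 q.2|}

/-!
An optimal Gromov–Hausdorff correspondence between `X` and a space `Y` with at most as many
points is, once `d_GH(X,Y) < δ(X)/6`, a bijection `f : X ≃ Y` moving every distance by less than
`δ(X)/3`. Since distinct distances of `X` differ by at least `δ(X)`, such an `f` preserves their
order. So for `Y`, `Y'` near `X` the bijection `f' ∘ f⁻¹ : Y ≃ Y'` pairs the `k`-th smallest
distance of `Y` with the `k`-th smallest distance of `Y'`: its distortion is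
`2 ‖ν(Y) − ν(Y')‖_∞`, whence `d_GH(Y,Y') ≤ ‖ν(Y) − ν(Y')‖_∞`. Conversely, a bijection of
distortion `2m` pairs the distances of `Y` and `Y'` within `m`, and by a counting argument so
does the sorted pairing, whence `‖ν(Y) − ν(Y')‖_∞ ≤ d_GH(Y,Y')`.
-/

open GromovHausdorff

lemma foldr_max_le_iff {l : List ℝ} {m : ℝ} :
    l.foldr max 0 ≤ m ↔ 0 ≤ m ∧ ∀ x ∈ l, x ≤ m := by
  induction l with
  | nil => simp
  | cons a l ih =>
    simp only [List.foldr_cons, max_le_iff, ih, List.mem_cons, forall_eq_or_imp]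
    tauto

lemma supDist_nonneg (l₁ l₂ : List ℝ) : 0 ≤ supDist l₁ l₂ :=
  (foldr_max_le_iff.1 le_rfl).1

lemma supDist_le {l₁ l₂ : List ℝ} {m : ℝ} (hm : 0 ≤ m)
    (h : ∀ i (h₁ : i < l₁.length) (h₂ : i < l₂.length), |l₁[i] - l₂[i]| ≤ m) :
    supDist l₁ l₂ ≤ m := by
  refine foldr_max_le_iff.2 ⟨hm, fun x hx => ?_⟩
  obtain ⟨i, hi, rfl⟩ := List.getElem_of_mem hx
  simp only [List.length_zipWith, lt_min_iff] at hi
  simpa only [List.getElem_zipWith] using h i hi.1 hi.2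

lemma supDist_map_map {α : Type*} (L : List α) (g h : α → ℝ) :
    supDist (L.map g) (L.map h) = (L.map fun x => |g x - h x|).foldr max 0 := by
  rw [supDist, List.zipWith_map, List.zipWith_self]

lemma List.le_getElem_of_countP_le {α : Type*} [LinearOrder α] {l : List α}
    (hl : l.Pairwise (· ≤ ·)) {i : ℕ}
    (hi : i < l.length) {t : α} (h : l.countP (· < t) ≤ i) : t ≤ l[i] := by
  by_contra! hlt
  have hprefix : ∀ x ∈ l.take (i + 1), x < t := by
    intro x hx
    obtain ⟨j, hj, rfl⟩ := List.getElem_of_mem hx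
    simp only [List.length_take, lt_min_iff] at hj
    rw [List.getElem_take]
    rcases (Nat.lt_succ_iff.1 hj.1).lt_or_eq with hji | rfl
    · exact (List.pairwise_iff_getElem.1 hl j i hj.2 hi hji).trans_lt hlt
    · exact hlt
  have := (List.take_sublist (i + 1) l).countP_le (p := (· < t))
  rw [List.countP_eq_length.2 (by simpa using hprefix), List.length_take] at this
  omega

lemma List.countP_lt_getElem_le {α : Type*} [LinearOrder α] {l : List α}
    (hl : l.Pairwise (· ≤ ·)) {i : ℕ}
    (hi : i < l.length) : l.countP (· < l[i]) ≤ i := by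
  have hsuffix : (l.drop i).countP (· < l[i]) = 0 := by
    refine List.countP_eq_zero.2 fun x hx => ?_
    obtain ⟨j, hj, rfl⟩ := List.getElem_of_mem hx
    rw [List.getElem_drop]
    simp only [List.length_drop] at hj
    rcases Nat.eq_zero_or_pos j with rfl | hj0
    · simp
    · simpa using List.pairwise_iff_getElem.1 hl i (i + j) hi (by omega) (by omega)
  have hsplit := List.countP_append (p := (· < l[i])) (l₁ := l.take i) (l₂ := l.drop i)
  rw [List.take_append_drop, hsuffix, add_zero] at hsplit
  exact hsplit ▸ List.countP_le_length.trans (List.length_take_le _ _)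

lemma Multiset.countP_mono_left {α : Type*} {p q : α → Prop} [DecidablePred p]
    [DecidablePred q] {s : Multiset α} (h : ∀ x ∈ s, p x → q x) : s.countP p ≤ s.countP q :=
  Quotient.inductionOn s (fun _ h => List.countP_mono_left (by simpa using h)) h

lemma Multiset.countP_sort {α : Type*} [LinearOrder α] (t : Multiset α) (p : α → Prop)
    [DecidablePred p] :
    (t.sort (· ≤ ·)).countP p = t.countP p := by
  rw [← Multiset.coe_countP, Multiset.sort_eq]

section SortMap

variable {α : Type*} (s : Multiset α) {g h : α → ℝ} {m : ℝ}

lemma getElem_sort_map_le_add (hgh : ∀ x ∈ s, g x ≤ h x + m) {i : ℕ}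
    (hg : i < ((s.map g).sort (· ≤ ·)).length) (hh : i < ((s.map h).sort (· ≤ ·)).length) :
    ((s.map g).sort (· ≤ ·))[i] ≤ ((s.map h).sort (· ≤ ·))[i] + m := by
  set a := (s.map g).sort (· ≤ ·)
  set b := (s.map h).sort (· ≤ ·)
  suffices a[i] - m ≤ b[i] by linarith
  refine List.le_getElem_of_countP_le (Multiset.pairwise_sort _ _) hh ?_
  -- each `x` with `h x < a[i] - m` has `g x < a[i]`, and fewer than `i + 1` entries of `a` do
  calc b.countP (· < a[i] - m) = s.countP (fun x => h x < a[i] - m) := by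
        rw [Multiset.countP_sort, Multiset.countP_map, Multiset.countP_eq_card_filter]
    _ ≤ s.countP (fun x => g x < a[i]) :=
        Multiset.countP_mono_left fun x hx hlt => by linarith [hgh x hx]
    _ = a.countP (· < a[i]) := by
        rw [Multiset.countP_sort, Multiset.countP_map, Multiset.countP_eq_card_filter]
    _ ≤ i := List.countP_lt_getElem_le (Multiset.pairwise_sort _ _) hg

lemma supDist_sort_map_le (hm : 0 ≤ m) (hgh : ∀ x ∈ s, |g x - h x| ≤ m) :
    supDist ((s.map g).sort (· ≤ ·)) ((s.map h).sort (· ≤ ·)) ≤ m := by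
  refine supDist_le hm fun i hg hh => abs_sub_le_iff.2 ⟨?_, ?_⟩
  · linarith [getElem_sort_map_le_add s (m := m)
      (fun x hx => by linarith [(abs_sub_le_iff.1 (hgh x hx)).1]) hg hh]
  · linarith [getElem_sort_map_le_add s (m := m)
      (fun x hx => by linarith [(abs_sub_le_iff.1 (hgh x hx)).2]) hh hg]

lemma abs_sub_le_supDist_sort_map (hmono : ∀ x ∈ s, ∀ y ∈ s, g x ≤ g y → h x ≤ h y)
    {x : α} (hx : x ∈ s) :
    |g x - h x| ≤ supDist ((s.map g).sort (· ≤ ·)) ((s.map h).sort (· ≤ ·)) := by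
  -- a list of `s` sorted by `g` is also sorted by `h`, so it realizes both sorted vectors
  set L := s.toList.mergeSort fun x y => decide (g x ≤ g y)
  have hL : (L : Multiset α) = s := by
    rw [Multiset.coe_eq_coe.2 (List.mergeSort_perm _ _), Multiset.coe_toList]
  have hLg : (L.map g).Pairwise (· ≤ ·) := by
    refine List.pairwise_map.2 ((List.pairwise_mergeSort ?_ ?_ _).imp fun h => by simpa using h)
    · intro a b c hab hbc
      simp only [decide_eq_true_eq] at *
      exact hab.trans hbc
    · intro a b
      simpa using le_total (g a) (g b)
  have hLh : (L.map h).Pairwise (· ≤ ·) := by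
    refine List.pairwise_map.2 ((List.pairwise_map.1 hLg).imp_of_mem fun ha hb hab => ?_)
    rw [← Multiset.mem_coe, hL] at ha hb
    exact hmono _ ha _ hb hab
  have hsort : ∀ k : α → ℝ, (L.map k).Pairwise (· ≤ ·) → (s.map k).sort (· ≤ ·) = L.map k :=
    fun k hk => List.Perm.eq_of_pairwise' (Multiset.pairwise_sort _ _) hk
      (Multiset.coe_eq_coe.1 (by rw [Multiset.sort_eq, ← Multiset.map_coe, hL]))
  rw [hsort g hLg, hsort h hLh, supDist_map_map]
  refine (foldr_max_le_iff.1 le_rfl).2 _ (List.mem_map.2 ⟨x, ?_, rfl⟩)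
  rwa [← Multiset.mem_coe, hL]

end SortMap

lemma filter_not_isDiag_eq_map {X Y : Type*} [Fintype X] [Fintype Y] (u : X ≃ Y) :
    (Finset.univ.filter fun p : Sym2 Y => ¬p.IsDiag) =
      (Finset.univ.filter fun p : Sym2 X => ¬p.IsDiag).map u.toEmbedding.sym2Map := by
  ext P
  simp only [Finset.mem_filter, Finset.mem_univ, true_and, Finset.mem_map,
    Function.Embedding.sym2Map_apply, Equiv.coe_toEmbedding]
  constructor
  · intro hP
    refine ⟨P.map u.symm, by rwa [Sym2.isDiag_map u.symm.injective], ?_⟩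
    rw [Sym2.map_map]
    simp
  · rintro ⟨Q, hQ, rfl⟩
    rwa [Sym2.isDiag_map u.injective]

noncomputable def halfDist (X : Type*) [MetricSpace X] : Sym2 X → ℝ :=
  Sym2.lift ⟨fun x y => dist x y / 2, fun x y => by simp [dist_comm]⟩

@[simp] lemma halfDist_mk {X : Type*} [MetricSpace X] (x y : X) :
    halfDist X s(x, y) = dist x y / 2 := rfl

lemma nuList_eq_sort_map {X Y : Type*} [Fintype X] [MetricSpace Y] [Fintype Y] (u : X ≃ Y) :
    nuList Y = (((Finset.univ.filter fun p : Sym2 X => ¬p.IsDiag).val.map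
      fun p => halfDist Y (p.map u)).sort (· ≤ ·)) := by
  rw [nuList, filter_not_isDiag_eq_map u, Finset.map_val, Multiset.map_map]
  rfl

section NuList

variable {X Y Z : Type*} [MetricSpace X] [Fintype X] [MetricSpace Y] [Fintype Y] [Fintype Z]

lemma supDist_nuList_le (f : Z ≃ X) (f' : Z ≃ Y)
    {m : ℝ} (hm : 0 ≤ m) (hff' : ∀ a b, |dist (f a) (f b) - dist (f' a) (f' b)| ≤ 2 * m) :
    supDist (nuList X) (nuList Y) ≤ m := by
  rw [nuList_eq_sort_map f, nuList_eq_sort_map f']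
  refine supDist_sort_map_le _ hm fun P _ => ?_
  induction P using Sym2.ind with
  | _ a b =>
    rw [Sym2.map_mk, Sym2.map_mk, halfDist_mk, halfDist_mk, ← sub_div, abs_div, abs_two]
    linarith [hff' a b]

lemma abs_dist_sub_le_two_supDist (f : Z ≃ X) (f' : Z ≃ Y)
    (hmono : ∀ x y z w : Z, x ≠ y → z ≠ w →
      dist (f x) (f y) ≤ dist (f z) (f w) → dist (f' x) (f' y) ≤ dist (f' z) (f' w))
    (x y : Z) : |dist (f x) (f y) - dist (f' x) (f' y)| ≤ 2 * supDist (nuList X) (nuList Y) := by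
  rcases eq_or_ne x y with rfl | hxy
  · simpa using supDist_nonneg (nuList X) (nuList Y)
  have hmono' : ∀ P ∈ (Finset.univ.filter fun p : Sym2 Z => ¬p.IsDiag).val,
      ∀ Q ∈ (Finset.univ.filter fun p : Sym2 Z => ¬p.IsDiag).val,
      halfDist X (P.map f) ≤ halfDist X (Q.map f) →
        halfDist Y (P.map f') ≤ halfDist Y (Q.map f') := by
    intro P hP Q hQ
    induction P using Sym2.ind with | _ a b => ?_
    induction Q using Sym2.ind with | _ c d => ?_
    simp only [Finset.mem_val, Finset.mem_filter, Finset.mem_univ, true_and,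
      Sym2.mk_isDiag_iff] at hP hQ
    simp only [Sym2.map_mk, halfDist_mk]
    intro h
    have := hmono a b c d hP hQ (by linarith)
    linarith
  have hxy' : s(x, y) ∈ (Finset.univ.filter fun p : Sym2 Z => ¬p.IsDiag).val := by simpa
  have := abs_sub_le_supDist_sort_map _ hmono' hxy'
  rw [← nuList_eq_sort_map, ← nuList_eq_sort_map, Sym2.map_mk, Sym2.map_mk,
    halfDist_mk, halfDist_mk, ← sub_div, abs_div, abs_two] at this
  linarith

end NuList

lemma forall_eq_or_eq_iff_card_le_two {X : Type*} [Fintype X] {x y : X} (hxy : x ≠ y) :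
    (∀ z, z = x ∨ z = y) ↔ Fintype.card X ≤ 2 := by
  constructor
  · intro h
    calc Fintype.card X = (Finset.univ : Finset X).card := rfl
      _ ≤ ({x, y} : Finset X).card := Finset.card_le_card fun z _ => by simpa using h z
      _ ≤ 2 := Finset.card_le_two
  · intro h z
    by_contra! hz
    have : ({x, y, z} : Finset X).card = 3 :=
      Finset.card_eq_three.2 ⟨x, y, z, hxy, hz.1.symm, hz.2.symm, rfl⟩
    have := Finset.card_le_univ ({x, y, z} : Finset X)
    omega

section Delta

variable {X : Type*} [MetricSpace X] [Fintype X]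

lemma deltaX_le_dist {x y : X} (hxy : x ≠ y) : deltaX X ≤ dist x y := by
  by_cases hc : Fintype.card X ≤ 2
  · have huniv : (Set.univ : Set X) = {x, y} :=
      Set.eq_univ_of_forall (fun z => by
        simpa using (forall_eq_or_eq_iff_card_le_two hxy).2 hc z) |>.symm
    rw [deltaX, if_pos hc, huniv, Metric.diam_pair]
  · obtain ⟨z, hz⟩ := not_forall.1 (mt (forall_eq_or_eq_iff_card_le_two hxy).1 hc)
    push Not at hz
    set T := {r : ℝ | ∃ x y z : X, x ≠ y ∧ y ≠ z ∧ x ≠ z ∧ r = dist x y + dist y z - dist x z}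
    have hbdd : BddBelow T := ⟨0, by
      rintro r ⟨a, b, c, -, -, -, rfl⟩
      linarith [dist_triangle a b c]⟩
    have h₁ : sInf T ≤ dist x y + dist y z - dist x z :=
      csInf_le hbdd ⟨x, y, z, hxy, hz.2.symm, hz.1.symm, rfl⟩
    have h₂ : sInf T ≤ dist z x + dist x y - dist z y :=
      csInf_le hbdd ⟨z, x, y, hz.1, hxy, hz.2, rfl⟩
    rw [deltaX, if_neg hc]
    linarith [min_le_left (sInf T) (sInf {r : ℝ | ∃ x y p q : X, x ≠ y ∧ p ≠ q ∧
      3 ≤ ({x, y, p, q} : Set X).ncard ∧ r = |dist x y - dist p q|}),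
      dist_comm x z, dist_comm y z]

lemma deltaX_le_abs_dist_sub {x y p q : X} (hxy : x ≠ y) (hpq : p ≠ q)
    (hne : s(x, y) ≠ s(p, q)) : deltaX X ≤ |dist x y - dist p q| := by
  by_cases hc : Fintype.card X ≤ 2
  · have hall := (forall_eq_or_eq_iff_card_le_two hxy).2 hc
    exfalso
    rcases hall p with rfl | rfl <;> rcases hall q with rfl | rfl
    all_goals first | exact hpq rfl | exact hne rfl | exact hne Sym2.eq_swap
  · rw [deltaX, if_neg hc]
    refine (min_le_right _ _).trans (csInf_le ⟨0, ?_⟩ ⟨x, y, p, q, hxy, hpq, ?_, rfl⟩)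
    · rintro r ⟨-, -, -, -, -, -, -, rfl⟩
      exact abs_nonneg _
    by_contra! h
    have hfin : ({x, y, p, q} : Set X).Finite := Set.toFinite _
    have e₁ : ({x, y} : Set X) = {x, y, p, q} :=
      Set.eq_of_subset_of_ncard_le
        (Set.insert_subset_insert (Set.singleton_subset_iff.2 (Set.mem_insert y _)))
        (by rw [Set.ncard_pair hxy]; omega) hfin
    have e₂ : ({p, q} : Set X) = {x, y, p, q} :=
      Set.eq_of_subset_of_ncard_le ((Set.subset_insert _ _).trans (Set.subset_insert _ _))
        (by rw [Set.ncard_pair hpq]; omega) hfin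
    exact hne (Sym2.eq_iff.2 (Set.pair_eq_pair_iff.1 (e₁.trans e₂.symm)))

end Delta

section Distortion

variable {X Y Y' : Type*} [MetricSpace X] [MetricSpace Y] [MetricSpace Y']

lemma dist_le_dist_of_distortion_le (f : X → Y) (f' : X → Y') {ε δ : ℝ} (hεδ : 2 * ε < δ)
    (hf : ∀ a b, |dist (f a) (f b) - dist a b| ≤ ε)
    (hf' : ∀ a b, |dist (f' a) (f' b) - dist a b| ≤ ε)
    (hsep : ∀ x y z w : X, x ≠ y → z ≠ w → s(x, y) ≠ s(z, w) → δ ≤ |dist x y - dist z w|)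
    {x y z w : X} (hxy : x ≠ y) (hzw : z ≠ w) (h : dist (f x) (f y) ≤ dist (f z) (f w)) :
    dist (f' x) (f' y) ≤ dist (f' z) (f' w) := by
  by_cases hne : s(x, y) = s(z, w)
  · rcases Sym2.eq_iff.1 hne with ⟨rfl, rfl⟩ | ⟨rfl, rfl⟩
    · rfl
    · exact (dist_comm _ _).le
  have hxyzw := hsep x y z w hxy hzw hne
  have := hf x y; have := hf z w; have := hf' x y; have := hf' z w
  rw [abs_le] at *
  rcases le_abs'.1 hxyzw with h' | h' <;> linarith

end Distortion

section GromovHausdorff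

variable {X Y : Type*} [MetricSpace X] [CompactSpace X] [Nonempty X]
  [MetricSpace Y] [CompactSpace Y] [Nonempty Y]

lemma ghDist_nonneg : 0 ≤ ghDist X Y := dist_nonneg

lemma exists_dist_optimalGHInj_le (x : X) :
    ∃ y : Y, dist (optimalGHInjl X Y x) (optimalGHInjr X Y y) ≤ ghDist X Y := by
  have hY : IsCompact (Set.range (optimalGHInjr X Y)) :=
    isCompact_range (isometry_optimalGHInjr X Y).continuous
  obtain ⟨_, ⟨y, rfl⟩, hy⟩ := hY.exists_infDist_eq_dist (Set.range_nonempty _)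
    (optimalGHInjl X Y x)
  refine ⟨y, ?_⟩
  rw [← hy, ← hausdorffDist_optimal]
  exact Metric.infDist_le_hausdorffDist_of_mem (Set.mem_range_self x) <|
    Metric.hausdorffEDist_ne_top_of_nonempty_of_bounded (Set.range_nonempty _)
    (Set.range_nonempty _)
    (isCompact_range (isometry_optimalGHInjl X Y).continuous).isBounded hY.isBounded

lemma exists_abs_dist_sub_le_two_ghDist :
    ∃ ψ : X → Y, ∀ a b, |dist (ψ a) (ψ b) - dist a b| ≤ 2 * ghDist X Y := by
  choose ψ hψ using exists_dist_optimalGHInj_le (X := X) (Y := Y)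
  refine ⟨ψ, fun a b => ?_⟩
  set il := optimalGHInjl X Y
  set ir := optimalGHInjr X Y
  rw [← (isometry_optimalGHInjl X Y).dist_eq a b, ← (isometry_optimalGHInjr X Y).dist_eq,
    abs_sub_le_iff]
  have := hψ a; have := hψ b
  constructor
  · linarith [dist_triangle4 (ir (ψ a)) (il a) (il b) (ir (ψ b)), dist_comm (ir (ψ a)) (il a)]
  · linarith [dist_triangle4 (il a) (ir (ψ a)) (ir (ψ b)) (il b), dist_comm (ir (ψ b)) (il b)]

lemma exists_equiv_abs_dist_sub_le_two_ghDist [Fintype X] [Fintype Y]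
    (hcard : Fintype.card Y ≤ Fintype.card X)
    (hsep : ∀ a b : X, a ≠ b → 2 * ghDist X Y < dist a b) :
    ∃ f : X ≃ Y, ∀ a b, |dist (f a) (f b) - dist a b| ≤ 2 * ghDist X Y := by
  obtain ⟨ψ, hψ⟩ := exists_abs_dist_sub_le_two_ghDist (X := X) (Y := Y)
  have hinj : Function.Injective ψ := fun a b hab => by
    by_contra hne
    have := hψ a b
    rw [hab, dist_self, zero_sub, abs_neg, abs_of_nonneg dist_nonneg] at this
    exact (hsep a b hne).not_ge this
  have hbij := (Fintype.bijective_iff_injective_and_card ψ).2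
    ⟨hinj, le_antisymm (Fintype.card_le_of_injective ψ hinj) hcard⟩
  exact ⟨Equiv.ofBijective ψ hbij, hψ⟩

lemma ghDist_le_of_equiv (u : X ≃ Y) {m : ℝ}
    (hu : ∀ a b, |dist (u a) (u b) - dist a b| ≤ 2 * m) : ghDist X Y ≤ m := by
  have := ghDist_le_of_approx_subsets (s := Set.univ) (fun x => u x.1) (ε₁ := 0) (ε₃ := 0)
    (fun x => ⟨x, Set.mem_univ x, by simp⟩) (fun y => ⟨⟨u.symm y, Set.mem_univ _⟩, by simp⟩)
    (fun x y => by rw [abs_sub_comm]; exact hu x y)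
  linarith

lemma ghDist_le_ghDist_add_ghDist {Z : Type*} [MetricSpace Z] [CompactSpace Z] [Nonempty Z] :
    ghDist Y Z ≤ ghDist X Y + ghDist X Z :=
  dist_triangle_left (toGHSpace Y) (toGHSpace Z) (toGHSpace X)

end GromovHausdorff

section NuListGromovHausdorff

variable {X Y : Type*} [MetricSpace X] [Fintype X] [Nonempty X]
  [MetricSpace Y] [Fintype Y] [Nonempty Y]

lemma ghDist_le_supDist_nuList {Z : Type*} [Fintype Z] (f : Z ≃ X) (f' : Z ≃ Y)
    (hmono : ∀ x y z w : Z, x ≠ y → z ≠ w →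
      dist (f x) (f y) ≤ dist (f z) (f w) → dist (f' x) (f' y) ≤ dist (f' z) (f' w)) :
    ghDist X Y ≤ supDist (nuList X) (nuList Y) := by
  refine ghDist_le_of_equiv (f.symm.trans f') fun a b => ?_
  obtain ⟨x, rfl⟩ := f.surjective a
  obtain ⟨y, rfl⟩ := f.surjective b
  simpa [abs_sub_comm] using abs_dist_sub_le_two_supDist f f' hmono x y

lemma supDist_nuList_le_ghDist (hcard : Fintype.card Y ≤ Fintype.card X)
    (hsep : ∀ a b : X, a ≠ b → 2 * ghDist X Y < dist a b) :
    supDist (nuList X) (nuList Y) ≤ ghDist X Y := by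
  obtain ⟨u, hu⟩ := exists_equiv_abs_dist_sub_le_two_ghDist hcard hsep
  exact supDist_nuList_le (Equiv.refl X) u ghDist_nonneg fun a b => by
    simpa [abs_sub_comm] using hu a b

end NuListGromovHausdorff

theorem ghDist_eq_supDist_near_generic_general
    (X Y Y' : Type) [MetricSpace X] [Fintype X] [Nonempty X]
    [MetricSpace Y] [Fintype Y] [Nonempty Y]
    [MetricSpace Y'] [Fintype Y'] [Nonempty Y']
    (hY : Fintype.card Y ≤ Fintype.card X) (hY' : Fintype.card Y' ≤ Fintype.card X)
    (h1 : GromovHausdorff.ghDist X Y < deltaX X / 6)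
    (h2 : GromovHausdorff.ghDist X Y' < deltaX X / 6) :
    Fintype.card Y = Fintype.card X ∧ Fintype.card Y' = Fintype.card X ∧
    GromovHausdorff.ghDist Y Y' = supDist (nuList Y) (nuList Y') := by
  have hδ : 0 < deltaX X := by linarith [ghDist_nonneg (X := X) (Y := Y)]
  obtain ⟨f, hf⟩ := exists_equiv_abs_dist_sub_le_two_ghDist hY fun a b hab => by
    linarith [deltaX_le_dist hab]
  obtain ⟨f', hf'⟩ := exists_equiv_abs_dist_sub_le_two_ghDist hY' fun a b hab => by
    linarith [deltaX_le_dist hab]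
  have hfδ : ∀ a b, |dist (f a) (f b) - dist a b| ≤ deltaX X / 3 :=
    fun a b => (hf a b).trans (by linarith)
  have hf'δ : ∀ a b, |dist (f' a) (f' b) - dist a b| ≤ deltaX X / 3 :=
    fun a b => (hf' a b).trans (by linarith)
  refine ⟨(Fintype.card_congr f).symm, (Fintype.card_congr f').symm, le_antisymm ?_ ?_⟩
  · exact ghDist_le_supDist_nuList f f' fun x y z w => dist_le_dist_of_distortion_le f f'
      (by linarith) hfδ hf'δ (fun _ _ _ _ => deltaX_le_abs_dist_sub)
  · refine supDist_nuList_le_ghDist (Fintype.card_congr (f'.symm.trans f)).le fun a b hab => ?_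
    obtain ⟨x, rfl⟩ := f.surjective a
    obtain ⟨y, rfl⟩ := f.surjective b
    linarith [deltaX_le_dist (f.injective.ne_iff.1 hab), (abs_le.1 (hfδ x y)).1,
      ghDist_le_ghDist_add_ghDist (X := X) (Y := Y) (Z := Y')]

/-- Local isometry of Gromov–Hausdorff space near a generic space: if `X` is generic with
`n ≥ 2` points, `δ = δ(X)/6`, and `Y`, `Y'` are metric spaces with at most `n` points
lying at Gromov–Hausdorff distance `< δ` from `X`, then both `Y` and `Y'` have exactly
`n` points and `d_GH(Y,Y') = ‖ν(Y) − ν(Y')‖_∞`. -/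
theorem ghDist_eq_supDist_near_generic
    (X Y Y' : Type) [MetricSpace X] [Fintype X] [Nonempty X]
    [MetricSpace Y] [Fintype Y] [Nonempty Y]
    [MetricSpace Y'] [Fintype Y'] [Nonempty Y']
    (hn : 2 ≤ Fintype.card X) (hX : IsGenericSpace X)
    (hY : Fintype.card Y ≤ Fintype.card X) (hY' : Fintype.card Y' ≤ Fintype.card X)
    (h1 : GromovHausdorff.ghDist X Y < deltaX X / 6)
    (h2 : GromovHausdorff.ghDist X Y' < deltaX X / 6) :
    Fintype.card Y = Fintype.card X ∧ Fintype.card Y' = Fintype.card X ∧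
    GromovHausdorff.ghDist Y Y' = supDist (nuList Y) (nuList Y') :=
  ghDist_eq_supDist_near_generic_general X Y Y' hY hY' h1 h2
end

section
/- Every finite nonempty metric space can be isometrically embedded into the Gromov–Hausdorff space, i.e., for every finite nonempty metric space X there exists a map f from X to the space of isometry classes of nonempty compact metric spaces such that d_GH(f(x), f(x')) = d(x,x') for all x, x' ∈ X. -/
/-!
To `x : X` attach the finite space `ApexSpace x`: the points of `X` at mutual distance `T`,
plus an apex at distance `T + λ y + 2 * dist x y` from `y`, where the labels `λ y` are pairwise
far apart. The metrics of `ApexSpace x` and `ApexSpace x'` on the common set `Option X` differ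
by at most `2 * dist x x'`, so their Gromov–Hausdorff distance `r` is at most `dist x x'`.
Conversely, a map `ApexSpace x → ApexSpace x'` of distortion `≤ 2 * r ≤ 2 * diam X` must fix the
apex (the only point far from all others) and then every `y` (by its label); comparing the
distances from the apex to `x` on both sides gives `2 * dist x x' ≤ 2 * r`.
-/

open Metric Set

namespace GromovHausdorff

variable {X : Type*} [MetricSpace X] [CompactSpace X] [Nonempty X]
  {Y : Type*} [MetricSpace Y] [CompactSpace Y] [Nonempty Y]

theorem ghDist_le_of_surjective {f : X → Y} (hf : Function.Surjective f) {ε : ℝ}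
    (hε : ∀ a b, |dist a b - dist (f a) (f b)| ≤ ε) : ghDist X Y ≤ ε / 2 := by
  have := ghDist_le_of_approx_subsets (s := univ) (fun a => f a) (ε₁ := 0) (ε₃ := 0)
    (fun a => ⟨a, mem_univ a, (dist_self a).le⟩)
    (fun b => ⟨⟨(hf b).choose, mem_univ _⟩, by rw [(hf b).choose_spec, dist_self]⟩)
    (fun a b => hε a b)
  simpa using this

theorem exists_abs_dist_sub_le_two_mul_ghDist :
    ∃ φ : X → Y, ∀ a b, |dist a b - dist (φ a) (φ b)| ≤ 2 * ghDist X Y := by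
  obtain ⟨Φ, Ψ, hΦ, hΨ, hGH⟩ := ghDist_eq_hausdorffDist X Y
  have hnear : ∀ a, ∃ b, dist (Φ a) (Ψ b) ≤ ghDist X Y := by
    intro a
    obtain ⟨_, ⟨b, rfl⟩, hb⟩ :=
      (isCompact_range hΨ.continuous).exists_infDist_eq_dist (range_nonempty Ψ) (Φ a)
    refine ⟨b, hb ▸ hGH ▸ infDist_le_hausdorffDist_of_mem (mem_range_self a) ?_⟩
    exact hausdorffEDist_ne_top_of_nonempty_of_bounded (range_nonempty Φ) (range_nonempty Ψ)
      (isCompact_range hΦ.continuous).isBounded (isCompact_range hΨ.continuous).isBounded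
  choose φ hφ using hnear
  refine ⟨φ, fun a b => ?_⟩
  have key := dist_dist_dist_le (Φ a) (Φ b) (Ψ (φ a)) (Ψ (φ b))
  rw [hΦ.dist_eq, hΨ.dist_eq, Real.dist_eq] at key
  linarith [hφ a, hφ b]

end GromovHausdorff

section Apex

variable {X : Type*}

open scoped Classical in
noncomputable def apexDist (T : ℝ) (h : X → ℝ) : Option X → Option X → ℝ
  | none, none => 0
  | none, some y => h y
  | some y, none => h y
  | some y, some z => if y = z then 0 else T

variable {T ε : ℝ} {h h' : X → ℝ}

@[simp] lemma apexDist_none_none : apexDist T h none none = 0 := rfl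
@[simp] lemma apexDist_none_some (y : X) : apexDist T h none (some y) = h y := rfl
@[simp] lemma apexDist_some_self (y : X) : apexDist T h (some y) (some y) = 0 := by
  simp [apexDist]

lemma apexDist_some_some_of_ne {y z : X} (hyz : y ≠ z) :
    apexDist T h (some y) (some z) = T := by
  simp [apexDist, hyz]

lemma apexDist_self (a : Option X) : apexDist T h a a = 0 := by
  cases a <;> simp

lemma apexDist_comm (a b : Option X) : apexDist T h a b = apexDist T h b a := by
  rcases a with _ | y <;> rcases b with _ | z <;> grind [apexDist]

lemma le_apexDist_of_ne (hTh : ∀ y, T ≤ h y) {a b : Option X} (hab : a ≠ b) :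
    T ≤ apexDist T h a b := by
  rcases a with _ | y <;> rcases b with _ | z
  · exact absurd rfl hab
  · exact hTh z
  · exact hTh y
  · rw [apexDist_some_some_of_ne (fun hyz => hab (congrArg some hyz))]

lemma apexDist_triangle (hT : 0 ≤ T) (hTh : ∀ y, T ≤ h y) (hhT : ∀ y, h y ≤ 2 * T)
    (a b c : Option X) : apexDist T h a c ≤ apexDist T h a b + apexDist T h b c := by
  rcases a with _ | y <;> rcases b with _ | w <;> rcases c with _ | z <;> grind [apexDist]

lemma abs_apexDist_sub_apexDist_le (hε : 0 ≤ ε) (hhh : ∀ y, |h y - h' y| ≤ ε)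
    (a b : Option X) : |apexDist T h a b - apexDist T h' a b| ≤ ε := by
  rcases a with _ | y <;> rcases b with _ | z
  · simpa using hε
  · exact hhh z
  · exact hhh y
  · rcases eq_or_ne y z with rfl | hyz
    · simpa using hε
    · simpa [apexDist_some_some_of_ne hyz] using hε

lemma apexDist_some_some_le (hT : 0 ≤ T) (y z : X) : apexDist T h (some y) (some z) ≤ T := by
  rcases eq_or_ne y z with rfl | hyz
  · simpa using hT
  · rw [apexDist_some_some_of_ne hyz]

noncomputable abbrev apexMetricSpace (hT : 0 < T) (hTh : ∀ y, T ≤ h y) (hhT : ∀ y, h y ≤ 2 * T) :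
    MetricSpace (Option X) where
  dist := apexDist T h
  dist_self := apexDist_self
  dist_comm := apexDist_comm
  dist_triangle := apexDist_triangle hT.le hTh hhT
  eq_of_dist_eq_zero {a b} hab := by
    by_contra hne
    exact hT.not_ge (hab ▸ le_apexDist_of_ne hTh hne)

section Rigidity

variable {φ : Option X → Option X}

lemma apex_fixed_of_abs_apexDist_sub_le [Nontrivial X] (hεT : ε < T) (hh : ∀ y, T + ε < h y)
    (hφ : ∀ a b, |apexDist T h a b - apexDist T h' (φ a) (φ b)| ≤ ε) : φ none = none := by
  have hT : 0 ≤ T := ((abs_nonneg _).trans (hφ none none)).trans hεT.le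
  by_contra hne
  obtain ⟨c, hc⟩ := Option.ne_none_iff_exists'.mp hne
  -- the points of `X` are too far from `φ none = some c` to land anywhere but on the apex
  have hsome : ∀ y, φ (some y) = none := by
    intro y
    rcases hy : φ (some y) with _ | z
    · rfl
    · have hdist := hφ none (some y)
      rw [hc, hy, apexDist_none_some] at hdist
      linarith [(le_abs_self _).trans hdist, apexDist_some_some_le (h := h') hT c z, hh y]
  obtain ⟨y, z, hyz⟩ := exists_pair_ne X
  have hdist := hφ (some y) (some z)
  rw [hsome, hsome, apexDist_some_some_of_ne hyz, apexDist_none_none, sub_zero] at hdist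
  linarith [le_abs_self T]

lemma abs_sub_le_of_abs_apexDist_sub_le [Nontrivial X] (hεT : ε < T) (hh : ∀ y, T + ε < h y)
    (hsep : ∀ y z, |h y - h' z| ≤ ε → z = y)
    (hφ : ∀ a b, |apexDist T h a b - apexDist T h' (φ a) (φ b)| ≤ ε) (y : X) :
    |h y - h' y| ≤ ε := by
  have hnone := apex_fixed_of_abs_apexDist_sub_le hεT hh hφ
  have hdist := hφ none (some y)
  rw [hnone, apexDist_none_some] at hdist
  rcases hy : φ (some y) with _ | z
  · rw [hy, apexDist_none_none, sub_zero] at hdist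
    linarith [le_abs_self (h y), hh y, ((abs_nonneg _).trans (hφ none none))]
  · rw [hy, apexDist_none_some] at hdist
    rwa [hsep y z hdist] at hdist

end Rigidity

end Apex

namespace ApexSpace

variable {X : Type*}

noncomputable def index [Fintype X] (y : X) : ℕ := Fintype.equivFin X y

lemma index_lt_card [Fintype X] (y : X) : index y < Fintype.card X :=
  (Fintype.equivFin X y).is_lt

lemma index_injective [Fintype X] : Function.Injective (index (X := X)) :=
  Fin.val_injective.comp (Fintype.equivFin X).injective

variable [MetricSpace X]

-- labels this far apart stay distinguishable after a perturbation of size `4 * diam`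
variable (X) in
noncomputable def gap : ℝ := 4 * diam (univ : Set X) + 1

lemma four_mul_diam_lt_gap : 4 * diam (univ : Set X) < gap X := lt_add_one _

lemma gap_pos : 0 < gap X := by
  have := diam_nonneg (s := (univ : Set X)); unfold gap; positivity

variable [Fintype X]

lemma dist_le_diam_univ (x y : X) : dist x y ≤ diam (univ : Set X) :=
  dist_le_diam_of_mem finite_univ.isBounded (mem_univ x) (mem_univ y)

noncomputable def label (y : X) : ℝ := gap X * (index y + 1)

lemma gap_le_label (y : X) : gap X ≤ label y :=
  le_mul_of_one_le_right gap_pos.le (by simp)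

lemma label_le (y : X) : label y ≤ Fintype.card X * gap X := by
  rw [label, mul_comm]
  gcongr
  · exact gap_pos.le
  · exact_mod_cast index_lt_card y

lemma gap_le_abs_label_sub {y z : X} (hyz : y ≠ z) : gap X ≤ |label y - label z| := by
  have hne : (index y : ℤ) - index z ≠ 0 :=
    sub_ne_zero.mpr (Nat.cast_injective.ne (index_injective.ne hyz))
  have hone : (1 : ℝ) ≤ |(index y : ℝ) - index z| := by exact_mod_cast Int.one_le_abs hne
  calc gap X = gap X * 1 := (mul_one _).symm
    _ ≤ gap X * |(index y : ℝ) - index z| := by gcongr; exact gap_pos.le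
    _ = |label y - label z| := by
      rw [label, label, ← mul_sub, abs_mul, abs_of_pos gap_pos, add_sub_add_right_eq_sub]

variable (X) in
noncomputable def side : ℝ := (Fintype.card X + 1) * gap X

noncomputable def height (x y : X) : ℝ := side X + label y + 2 * dist x y

lemma side_pos : 0 < side X := by
  have := gap_pos (X := X); unfold side; positivity

lemma side_add_two_mul_diam_lt_height (x y : X) :
    side X + 2 * diam (univ : Set X) < height x y := by
  have := four_mul_diam_lt_gap (X := X)
  rw [height]
  linarith [gap_le_label y, dist_nonneg (x := x) (y := y), diam_nonneg (s := (univ : Set X))]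

lemma height_le_two_mul_side (x y : X) : height x y ≤ 2 * side X := by
  have := four_mul_diam_lt_gap (X := X)
  rw [height, side, add_one_mul]
  linarith [label_le y, dist_le_diam_univ x y, diam_nonneg (s := (univ : Set X))]

lemma height_sub_height (x x' y : X) :
    height x y - height x' y = 2 * (dist x y - dist x' y) := by
  rw [height, height]; ring

lemma eq_of_abs_height_sub_height_le {x x' y z : X} {ε : ℝ} (hε : ε ≤ 2 * diam (univ : Set X))
    (hyz : |height x y - height x' z| ≤ ε) : z = y := by
  by_contra hzy
  have hgap := gap_le_abs_label_sub (Ne.symm hzy)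
  have hdiff : height x y - height x' z = label y - label z + 2 * (dist x y - dist x' z) := by
    rw [height, height]; ring
  rw [hdiff, abs_le] at hyz
  rw [le_abs'] at hgap
  have := four_mul_diam_lt_gap (X := X)
  have := dist_le_diam_univ x y; have := dist_le_diam_univ x' z
  have := dist_nonneg (x := x) (y := y); have := dist_nonneg (x := x') (y := z)
  rcases hgap with hgap | hgap <;> linarith [hyz.1, hyz.2]

def _root_.ApexSpace (_x : X) : Type _ := Option X

noncomputable instance (x : X) : MetricSpace (ApexSpace x) :=
  apexMetricSpace side_pos
    (fun y => by linarith [side_add_two_mul_diam_lt_height x y, diam_nonneg (s := (univ : Set X))])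
    (height_le_two_mul_side x)

instance (x : X) : Finite (ApexSpace x) := inferInstanceAs (Finite (Option X))

instance (x : X) : CompactSpace (ApexSpace x) := Finite.compactSpace

instance (x : X) : Nonempty (ApexSpace x) := inferInstanceAs (Nonempty (Option X))

open GromovHausdorff

theorem ghDist_le_dist (x x' : X) : ghDist (ApexSpace x) (ApexSpace x') ≤ dist x x' := by
  have hheight (y : X) : |height x y - height x' y| ≤ 2 * dist x x' := by
    rw [height_sub_height, abs_mul, abs_two]
    exact mul_le_mul_of_nonneg_left (abs_dist_sub_le x x' y) zero_le_two
  have := ghDist_le_of_surjective (X := ApexSpace x) (Y := ApexSpace x') (f := id)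
    Function.surjective_id (abs_apexDist_sub_apexDist_le (by positivity) hheight)
  linarith

theorem dist_le_ghDist (x x' : X) : dist x x' ≤ ghDist (ApexSpace x) (ApexSpace x') := by
  rcases eq_or_ne x x' with rfl | hne
  · rw [dist_self]
    exact dist_nonneg
  have : Nontrivial X := ⟨⟨x, x', hne⟩⟩
  obtain ⟨φ, hφ⟩ := exists_abs_dist_sub_le_two_mul_ghDist (X := ApexSpace x) (Y := ApexSpace x')
  have hε : 2 * ghDist (ApexSpace x) (ApexSpace x') ≤ 2 * diam (univ : Set X) := by
    linarith [ghDist_le_dist x x', dist_le_diam_univ x x']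
  have hεT : 2 * ghDist (ApexSpace x) (ApexSpace x') < side X := by
    linarith [side_add_two_mul_diam_lt_height x x, height_le_two_mul_side x x]
  have hapex := abs_sub_le_of_abs_apexDist_sub_le (φ := φ) hεT
    (fun y => by linarith [side_add_two_mul_diam_lt_height x y])
    (fun y z => eq_of_abs_height_sub_height_le hε) hφ x
  rw [height_sub_height, dist_self, zero_sub, abs_mul, abs_neg, abs_two,
    abs_of_nonneg dist_nonneg, dist_comm] at hapex
  linarith

end ApexSpace

theorem finite_metric_space_embeds_into_GHSpace_general
    (X : Type) [MetricSpace X] [Fintype X] :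
    ∃ f : X → GromovHausdorff.GHSpace,
      ∀ x x' : X, dist (f x) (f x') = dist x x' :=
  ⟨fun x => GromovHausdorff.toGHSpace (ApexSpace x),
    fun x x' => le_antisymm (ApexSpace.ghDist_le_dist x x') (ApexSpace.dist_le_ghDist x x')⟩

/-- Every finite nonempty metric space can be isometrically embedded into the
Gromov–Hausdorff space. -/
theorem finite_metric_space_embeds_into_GHSpace
    (X : Type) [MetricSpace X] [Fintype X] [Nonempty X] :
    ∃ f : X → GromovHausdorff.GHSpace,
      ∀ x x' : X, dist (f x) (f x') = dist x x' :=
  finite_metric_space_embeds_into_GHSpace_general X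
end
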